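/- arXiv:quant-ph/0302053 — 2 statements merged into one kernel-verified Lean document; each statement's English description precedes it below -/
import Mathlib

section
/- Let p be an s-map on a quantum logic L. If a and b are compatible, then p(a,b) = p(a∧b, a∧b) = p(b,a). -/
/-- A quantum logic: an orthomodular lattice. -/
class QuantumLogic (L : Type*) extends Lattice L, BoundedOrder L, Compl L where
  compl_compl : ∀ a : L, aᶜᶜ = a
  sup_compl : ∀ a : L, a ⊔ aᶜ = ⊤
  compl_le_compl : ∀ a b : L, a ≤ b → bᶜ ≤ aᶜ
  orthomodular : ∀ a b : L, a ≤ b → b = a ⊔ aᶜ ⊓ b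

section Defs
variable {L : Type*} [QuantumLogic L]

/-- Orthogonality: `a ⊥ b` iff `a ≤ bᶜ`. -/
def Orth (a b : L) : Prop := a ≤ bᶜ

/-- Compatibility: `a ↔ b` iff they decompose via mutually orthogonal elements. -/
def Compatible (a b : L) : Prop :=
  ∃ a₁ b₁ c : L, Orth a₁ b₁ ∧ Orth a₁ c ∧ Orth b₁ c ∧ a = a₁ ⊔ c ∧ b = b₁ ⊔ c

/-- An s-map on a quantum logic. -/
structure IsSMap (p : L → L → ℝ) : Prop where
  nonneg : ∀ a b, 0 ≤ p a b
  le_one : ∀ a b, p a b ≤ 1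
  top_top : p ⊤ ⊤ = 1
  orth_zero : ∀ a b, Orth a b → p a b = 0
  add_left : ∀ a b c, Orth a b → p (a ⊔ b) c = p a c + p b c
  add_right : ∀ a b c, Orth a b → p c (a ⊔ b) = p c a + p c b

/-- A conditional system in `L`. -/
def IsCondSystem (Lc : Set L) : Prop :=
  (⊥ : L) ∉ Lc ∧ (∀ a ∈ Lc, ∀ b ∈ Lc, a ⊔ b ∈ Lc) ∧
    ∀ a ∈ Lc, ∀ b ∈ Lc, a < b → aᶜ ⊓ b ∈ Lc

/-- A conditional state `f : L × L_c → [0,1]`. -/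
structure IsConditionalState (Lc : Set L) (f : L → L → ℝ) : Prop where
  nonneg : ∀ a b, b ∈ Lc → 0 ≤ f a b
  le_one : ∀ a b, b ∈ Lc → f a b ≤ 1
  state_bot : ∀ a ∈ Lc, f ⊥ a = 0
  state_top : ∀ a ∈ Lc, f ⊤ a = 1
  state_add : ∀ a ∈ Lc, ∀ b c : L, Orth b c → f (b ⊔ c) a = f b a + f c a
  diag : ∀ a ∈ Lc, f a a = 1
  cond : ∀ s : Finset L, (↑s : Set L) ⊆ Lc →
    (∀ a ∈ s, ∀ b ∈ s, a ≠ b → Orth a b) → s.sup id ∈ Lc →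
    ∀ d : L, f d (s.sup id) = ∑ a ∈ s, f a (s.sup id) * f d a

/-- A finite-spectrum discrete observable, given by its family of atoms
(mutually orthogonal events whose join is `⊤`). -/
def IsFinObs {n : ℕ} (e : Fin n → L) : Prop :=
  (∀ i j, i ≠ j → Orth (e i) (e j)) ∧ Finset.univ.sup e = ⊤

/-- Expectation `ν(x)` of a finite-spectrum observable with values `v` and events `e`
in the state `ν(b) = p(b,b)`. -/
noncomputable def nuObs (p : L → L → ℝ) {n : ℕ} (v : Fin n → ℝ) (e : Fin n → L) : ℝ :=
  ∑ i, v i * p (e i) (e i)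

/-- First joint moment `p(x,y)` of two finite-spectrum observables. -/
noncomputable def jointMoment (p : L → L → ℝ) {n m : ℕ} (xv : Fin n → ℝ) (xe : Fin n → L)
    (yv : Fin m → ℝ) (ye : Fin m → L) : ℝ :=
  ∑ i, ∑ j, xv i * yv j * p (xe i) (ye j)

/-- Covariance `c(x,y) = p(x,y) - ν(x)ν(y)`. -/
noncomputable def covObs (p : L → L → ℝ) {n m : ℕ} (xv : Fin n → ℝ) (xe : Fin n → L)
    (yv : Fin m → ℝ) (ye : Fin m → L) : ℝ :=
  jointMoment p xv xe yv ye - nuObs p xv xe * nuObs p yv ye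

end Defs

section Aux
variable {L : Type*} [QuantumLogic L]

lemma orth_symm {a b : L} (h : Orth a b) : Orth b a := by
  have := QuantumLogic.compl_le_compl a bᶜ h
  rwa [QuantumLogic.compl_compl] at this

lemma ql_inf_compl (a : L) : a ⊓ aᶜ = ⊥ := by
  have h1 : (a ⊓ aᶜ)ᶜ = ⊤ := by
    have ha := QuantumLogic.compl_le_compl (a ⊓ aᶜ) a inf_le_left
    have hb := QuantumLogic.compl_le_compl (a ⊓ aᶜ) aᶜ inf_le_right
    rw [QuantumLogic.compl_compl] at hb
    have : a ⊔ aᶜ ≤ (a ⊓ aᶜ)ᶜ := sup_le hb ha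
    rw [QuantumLogic.sup_compl] at this
    exact top_le_iff.mp this
  have := congrArg (·ᶜ) h1
  simp only [QuantumLogic.compl_compl] at this
  rw [this]
  have hbot : (⊥ : L)ᶜ = ⊤ := by
    have := QuantumLogic.sup_compl (⊥ : L); simpa using this
  have := congrArg (·ᶜ) hbot
  simp only [QuantumLogic.compl_compl] at this
  exact this.symm

lemma ql_le_compl_sup {a b c : L} (h1 : a ≤ bᶜ) (h2 : a ≤ cᶜ) : a ≤ (b ⊔ c)ᶜ := by
  have hb := QuantumLogic.compl_le_compl (bᶜ ⊓ cᶜ) bᶜ inf_le_left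
  have hc := QuantumLogic.compl_le_compl (bᶜ ⊓ cᶜ) cᶜ inf_le_right
  rw [QuantumLogic.compl_compl] at hb hc
  have : b ⊔ c ≤ (bᶜ ⊓ cᶜ)ᶜ := sup_le hb hc
  have := QuantumLogic.compl_le_compl _ _ this
  rw [QuantumLogic.compl_compl] at this
  exact le_trans (le_inf h1 h2) this

lemma ql_key {a₁ b c : L} (h1 : a₁ ≤ bᶜ) (h2 : c ≤ b) : (a₁ ⊔ c) ⊓ b = c := by
  -- first: cᶜ ⊓ (a₁ ⊔ c) = a₁
  have hac : a₁ ≤ cᶜ := by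
    have := QuantumLogic.compl_le_compl c b h2
    exact le_trans h1 this
  have hf : cᶜ ⊓ (a₁ ⊔ c) = a₁ := by
    have hle : a₁ ≤ cᶜ ⊓ (a₁ ⊔ c) := le_inf hac le_sup_left
    have hom := QuantumLogic.orthomodular a₁ (cᶜ ⊓ (a₁ ⊔ c)) hle
    have hz : a₁ᶜ ⊓ (cᶜ ⊓ (a₁ ⊔ c)) = ⊥ := by
      set x := a₁ᶜ ⊓ (cᶜ ⊓ (a₁ ⊔ c)) with hx
      have h3 : x ≤ (a₁ ⊔ c)ᶜ :=
        ql_le_compl_sup inf_le_left (le_trans inf_le_right inf_le_left)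
      have h4 : x ≤ (a₁ ⊔ c) ⊓ (a₁ ⊔ c)ᶜ :=
        le_inf (le_trans inf_le_right inf_le_right) h3
      rw [ql_inf_compl] at h4
      exact le_bot_iff.mp h4
    rw [hz, sup_bot_eq] at hom
    exact hom
  have hle2 : c ≤ (a₁ ⊔ c) ⊓ b := le_inf le_sup_right h2
  have hom := QuantumLogic.orthomodular c ((a₁ ⊔ c) ⊓ b) hle2
  have hz : cᶜ ⊓ ((a₁ ⊔ c) ⊓ b) = ⊥ := by
    have h3 : cᶜ ⊓ ((a₁ ⊔ c) ⊓ b) ≤ a₁ :=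
      le_trans (le_inf inf_le_left (le_trans inf_le_right inf_le_left)) hf.le
    have h4 : cᶜ ⊓ ((a₁ ⊔ c) ⊓ b) ≤ b ⊓ bᶜ := by
      refine le_inf (le_trans inf_le_right inf_le_right) (le_trans h3 h1)
    rw [ql_inf_compl] at h4
    exact le_bot_iff.mp h4
  rw [hz, sup_bot_eq] at hom
  exact hom

end Aux

/-- for compatible `a ↔ b`, `p(a,b) = p(a∧b, a∧b) = p(b,a)`. -/
theorem smap_compatible {L : Type*} [QuantumLogic L] (p : L → L → ℝ) (hp : IsSMap p)
    (a b : L) (hab : Compatible a b) :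
    p a b = p (a ⊓ b) (a ⊓ b) ∧ p b a = p (a ⊓ b) (a ⊓ b) := by
  obtain ⟨a₁, b₁, c, hab1, hac, hbc, ha, hb⟩ := hab
  have hcb : c ≤ b := by rw [hb]; exact le_sup_right
  have ha1b : Orth a₁ b := by
    rw [hb]; exact ql_le_compl_sup hab1 hac
  have hb1a : Orth b₁ a := by
    rw [ha]; exact ql_le_compl_sup (orth_symm hab1) hbc
  have hmeet : a ⊓ b = c := by
    rw [ha, hb]; exact ql_key (ql_le_compl_sup hab1 hac) le_sup_right
  rw [hmeet]
  constructor
  · rw [ha, hp.add_left a₁ c b hac, hp.orth_zero a₁ b ha1b, hb,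
      hp.add_right b₁ c c hbc, hp.orth_zero c b₁ (orth_symm hbc)]
    ring
  · rw [hb, hp.add_left b₁ c a hbc, hp.orth_zero b₁ a hb1a, ha,
      hp.add_right a₁ c c hac, hp.orth_zero c a₁ (orth_symm hac)]
    ring
end

section
/- Let L be a quantum logic with conditional system L_c = L∖{0} and let f : L × L_c → [0,1] be a conditional state. Define p_f(a,b) = f(a,b)·f(b,1) for b ≠ 0 and p_f(a,0) = 0. Then p_f is an s-map on L. -/
section Aux
variable {L : Type*} [QuantumLogic L]

lemma QL.bot_compl : (⊥ : L)ᶜ = ⊤ := by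
  have := QuantumLogic.sup_compl (⊥ : L); simpa using this

lemma QL.top_compl : (⊤ : L)ᶜ = ⊥ := by
  have := QuantumLogic.compl_compl (⊥ : L); rw [QL.bot_compl] at this; exact this

lemma QL.eq_bot_of_le_compl {a : L} (h : a ≤ aᶜ) : a = ⊥ := by
  have h1 : aᶜ = a ⊔ aᶜ ⊓ aᶜ := QuantumLogic.orthomodular a aᶜ h
  rw [inf_idem, QuantumLogic.sup_compl] at h1
  have := QuantumLogic.compl_compl a
  rw [h1, QL.top_compl] at this; exact this.symm

lemma QL.orth_self_compl (a : L) : Orth a aᶜ := by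
  unfold Orth; rw [QuantumLogic.compl_compl]

lemma QL.mono {Lc : Set L} {f : L → L → ℝ} (hf : IsConditionalState Lc f)
    {a c b : L} (hb : b ∈ Lc) (h : a ≤ c) : f a b ≤ f c b := by
  have hom : c = a ⊔ aᶜ ⊓ c := QuantumLogic.orthomodular a c h
  have horth : Orth a (aᶜ ⊓ c) := by
    unfold Orth
    have h1 : aᶜ ⊓ c ≤ aᶜ := inf_le_left
    have := QuantumLogic.compl_le_compl _ _ h1
    rwa [QuantumLogic.compl_compl] at this
  have := hf.state_add b hb a (aᶜ ⊓ c) horth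
  rw [← hom] at this
  have hn := hf.nonneg (aᶜ ⊓ c) b hb
  linarith

lemma QL.compl_eq_zero {f : L → L → ℝ} (hf : IsConditionalState {x : L | x ≠ ⊥} f)
    {c : L} (hc : c ≠ ⊥) : f cᶜ c = 0 := by
  have horth : Orth c cᶜ := QL.orth_self_compl c
  have := hf.state_add c hc c cᶜ horth
  rw [QuantumLogic.sup_compl, hf.state_top c hc, hf.diag c hc] at this
  linarith

lemma QL.orth_zero' {f : L → L → ℝ} (hf : IsConditionalState {x : L | x ≠ ⊥} f)
    {a c : L} (hc : c ≠ ⊥) (h : Orth a c) : f a c = 0 := by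
  have h1 : f a c ≤ f cᶜ c := QL.mono hf hc h
  rw [QL.compl_eq_zero hf hc] at h1
  have h2 := hf.nonneg a c hc
  linarith

/-- Key chain rule: if `d ≤ s`, `s ≠ ⊥`, `⊤ ≠ ⊥`, then `f d ⊤ = f s ⊤ * f d s`. -/
lemma QL.chain [DecidableEq L] {f : L → L → ℝ} (hf : IsConditionalState {x : L | x ≠ ⊥} f)
    (htb : (⊤ : L) ≠ ⊥) {d s : L} (hs : s ≠ ⊥) (hds : d ≤ s) :
    f d ⊤ = f s ⊤ * f d s := by
  by_cases hsc : sᶜ = ⊥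
  · have hst : s = ⊤ := by
      have := QuantumLogic.compl_compl s
      rw [hsc, QL.bot_compl] at this; exact this.symm
    rw [hst, hf.state_top ⊤ htb]; ring
  · have hne : s ≠ sᶜ := by
      intro h
      exact hs (QL.eq_bot_of_le_compl (le_of_eq h))
    have hsub : (↑({s, sᶜ} : Finset L) : Set L) ⊆ {x : L | x ≠ ⊥} := by
      intro x hx
      simp only [Finset.coe_insert, Finset.coe_singleton, Set.mem_insert_iff,
        Set.mem_singleton_iff] at hx
      rcases hx with h | h <;> simp [h, hs, hsc]
    have horth : ∀ a ∈ ({s, sᶜ} : Finset L), ∀ b ∈ ({s, sᶜ} : Finset L), a ≠ b → Orth a b := by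
      intro a ha b hb hab
      simp only [Finset.mem_insert, Finset.mem_singleton] at ha hb
      rcases ha with rfl | rfl <;> rcases hb with rfl | rfl
      · exact absurd rfl hab
      · exact QL.orth_self_compl a
      · exact le_refl _
      · exact absurd rfl hab
    have hsup : ({s, sᶜ} : Finset L).sup id = ⊤ := by
      simp [QuantumLogic.sup_compl]
    have hc := hf.cond {s, sᶜ} hsub horth (by rw [hsup]; exact htb) d
    rw [hsup, Finset.sum_pair hne] at hc
    have hdz : f d sᶜ = 0 := by
      apply QL.orth_zero' hf hsc
      unfold Orth; rwa [QuantumLogic.compl_compl]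
    rw [hdz] at hc
    rw [hc]; ring

end Aux

/-- a conditional state on `L_c = L∖{0}` induces an s-map
`p_f(a,b) = f(a,b)·f(b,1)`. -/
theorem conditional_state_to_smap {L : Type*} [QuantumLogic L] [DecidableEq L]
    (htb : (⊤ : L) ≠ ⊥) (f : L → L → ℝ)
    (hf : IsConditionalState {x : L | x ≠ ⊥} f) :
    IsSMap (fun a b => if b = ⊥ then 0 else f a b * f b ⊤) := by
  have h01 : ∀ a b : L, b ≠ ⊥ → 0 ≤ f a b ∧ f a b ≤ 1 := fun a b hb =>
    ⟨hf.nonneg a b hb, hf.le_one a b hb⟩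
  constructor
  · intro a b
    by_cases hb : b = ⊥
    · simp [hb]
    · simp only [hb, if_false]
      exact mul_nonneg (h01 a b hb).1 (h01 b ⊤ htb).1
  · intro a b
    by_cases hb : b = ⊥
    · simp [hb]
    · simp only [hb, if_false]
      calc f a b * f b ⊤ ≤ 1 * 1 := by
            apply mul_le_mul (h01 a b hb).2 (h01 b ⊤ htb).2 (h01 b ⊤ htb).1 zero_le_one
        _ = 1 := by ring
  · simp only [htb, if_false]
    rw [hf.state_top ⊤ htb]; ring
  · intro a b hab
    by_cases hb : b = ⊥
    · simp [hb]
    · simp only [hb, if_false]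
      rw [QL.orth_zero' hf hb hab]; ring
  · intro a b c hab
    by_cases hc : c = ⊥
    · simp [hc]
    · simp only [hc, if_false]
      rw [hf.state_add c hc a b hab]; ring
  · intro a b c hab
    by_cases ha : a = ⊥
    · subst ha; simp
    by_cases hb : b = ⊥
    · subst hb; simp
    have hne : a ≠ b := by
      rintro rfl
      exact ha (QL.eq_bot_of_le_compl hab)
    have hsb : a ⊔ b ≠ ⊥ := by
      intro h
      exact ha (le_bot_iff.mp (h ▸ le_sup_left : a ≤ ⊥))
    simp only [ha, hb, hsb, if_false]
    have hsub : (↑({a, b} : Finset L) : Set L) ⊆ {x : L | x ≠ ⊥} := by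
      intro x hx
      simp only [Finset.coe_insert, Finset.coe_singleton, Set.mem_insert_iff,
        Set.mem_singleton_iff] at hx
      rcases hx with h | h <;> simp [h, ha, hb]
    have horth : ∀ x ∈ ({a, b} : Finset L), ∀ y ∈ ({a, b} : Finset L), x ≠ y → Orth x y := by
      intro x hx y hy hxy
      simp only [Finset.mem_insert, Finset.mem_singleton] at hx hy
      rcases hx with rfl | rfl <;> rcases hy with rfl | rfl
      · exact absurd rfl hxy
      · exact hab
      · unfold Orth
        have := QuantumLogic.compl_le_compl _ _ hab
        rwa [QuantumLogic.compl_compl] at this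
      · exact absurd rfl hxy
    have hsup : ({a, b} : Finset L).sup id = a ⊔ b := by simp
    have hc := hf.cond {a, b} hsub horth (by rw [hsup]; exact hsb) c
    rw [hsup, Finset.sum_pair hne] at hc
    have hca : f a ⊤ = f (a ⊔ b) ⊤ * f a (a ⊔ b) := QL.chain hf htb hsb le_sup_left
    have hcb : f b ⊤ = f (a ⊔ b) ⊤ * f b (a ⊔ b) := QL.chain hf htb hsb le_sup_right
    rw [hc, hca, hcb]; ring
end
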